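/- arXiv:1708.04340 — 2 statements merged into one kernel-verified Lean document; each statement's English description precedes it below -/
import Mathlib

section
/- Let P be a very ample lattice polytope. Then P is normal (i.e., k_P = 1) if and only if d_P = k_P. -/
open Finset Pointwise

noncomputable section

/-- Lattice points: `ZL N = ℤ^N`. -/
abbrev ZL (N : ℕ) := Fin N → ℤ

/-- Embedding of the lattice into `ℝ^N`. -/
def toR {N : ℕ} (x : ZL N) : Fin N → ℝ := fun i => (x i : ℝ)

/-- The lattice polytope spanned by a finite set `V` of lattice points. -/
def poly {N : ℕ} (V : Finset (ZL N)) : Set (Fin N → ℝ) :=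
  convexHull ℝ (toR '' (V : Set (ZL N)))

/-- The lattice points of the dilate `k • P`. -/
def latPts {N : ℕ} (V : Finset (ZL N)) (k : ℕ) : Set (ZL N) :=
  {x | toR x ∈ (k : ℝ) • poly V}

/-- `P` is `k`-normal: every lattice point of `kP` is a sum of `k` lattice points of `P`. -/
def kNormal {N : ℕ} (V : Finset (ZL N)) (k : ℕ) : Prop :=
  ∀ x ∈ latPts V k, ∃ f : Fin k → ZL N, (∀ i, f i ∈ latPts V 1) ∧ ∑ i, f i = x

/-- `P` is normal. -/
def NormalPoly {N : ℕ} (V : Finset (ZL N)) : Prop := ∀ k, 1 ≤ k → kNormal V k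

/-- The set of which `d_P` is the least element. -/
def dSet {N : ℕ} (V : Finset (ZL N)) : Set ℕ :=
  {n | 0 < n ∧ ∀ k ≥ n, latPts V (k + 1) = latPts V 1 + latPts V k}

/-- The set of which the `k`-normality threshold `k_P` is the least element. -/
def kSet {N : ℕ} (V : Finset (ZL N)) : Set ℕ :=
  {K | 0 < K ∧ ∀ k ≥ K, kNormal V k}

/-- The set of which `ν_P` is the least element. -/
def nuSet {N : ℕ} (V : Finset (ZL N)) : Set ℕ :=
  {n | 0 < n ∧ ∀ k ≥ n, latPts V (k + 1) = (V : Set (ZL N)) + latPts V k}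

/-- `v` is a vertex of `P`. -/
def IsVertex {N : ℕ} (V : Finset (ZL N)) (v : ZL N) : Prop :=
  v ∈ V ∧ toR v ∈ Set.extremePoints ℝ (poly V)

/-- `P` is very ample: for every vertex `v`, every lattice point of the cone
`ℝ_{≥0}(P - v)` is a finite sum of elements `w - v` with `w ∈ P ∩ M`. -/
def VeryAmple {N : ℕ} (V : Finset (ZL N)) : Prop :=
  ∀ v, IsVertex V v → ∀ u : ZL N,
    (∃ c : ℝ, 0 ≤ c ∧ ∃ p ∈ poly V, toR u = c • (p - toR v)) →
    ∃ (m : ℕ) (w : Fin m → ZL N), (∀ i, w i ∈ latPts V 1) ∧ u = ∑ i, (w i - v)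

/-- The set of numbers `m` such that `x - d_P v` is a sum of `m` elements of `(P ∩ M) - v`;
`σ(x, d_P v)` is its least element. -/
def sigmaSet {N : ℕ} (V : Finset (ZL N)) (dP : ℕ) (x v : ZL N) : Set ℕ :=
  {m | ∃ w : Fin m → ZL N, (∀ i, w i ∈ latPts V 1) ∧ x - dP • v = ∑ i, (w i - v)}

/-- The set of all values `σ(x, d_P v)`; `m_P` is its greatest element. -/
def mSet {N : ℕ} (V : Finset (ZL N)) (dP : ℕ) : Set ℕ :=
  {s | ∃ x ∈ latPts V dP, ∃ v, IsVertex V v ∧ IsLeast (sigmaSet V dP x v) s}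

end

lemma toR_sum {N m : ℕ} (f : Fin m → ZL N) : toR (∑ i, f i) = ∑ i, toR (f i) := by
  funext j
  simp only [toR, Finset.sum_apply]
  push_cast
  rfl

lemma toR_add {N : ℕ} (x y : ZL N) : toR (x + y) = toR x + toR y := by
  funext j; simp [toR]

lemma mem_latPts_one {N : ℕ} {V : Finset (ZL N)} {x : ZL N} :
    x ∈ latPts V 1 ↔ toR x ∈ poly V := by
  simp [latPts]

lemma sum_mem_latPts {N : ℕ} (V : Finset (ZL N)) {k : ℕ} (hk : 1 ≤ k)
    (f : Fin k → ZL N) (hf : ∀ i, f i ∈ latPts V 1) :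
    ∑ i, f i ∈ latPts V k := by
  have hconv : Convex ℝ (poly V) := convex_convexHull ℝ _
  have hk0 : (k : ℝ) ≠ 0 := by positivity
  have hp : ((k : ℝ)⁻¹ • ∑ i, toR (f i)) ∈ poly V := by
    rw [Finset.smul_sum]
    refine hconv.sum_mem (fun i _ => by positivity) ?_ (fun i _ => mem_latPts_one.mp (hf i))
    simp [Finset.sum_const, Finset.card_univ, hk0]
  refine Set.mem_setOf.mpr ?_
  rw [toR_sum]
  exact ⟨_, hp, smul_inv_smul₀ hk0 _⟩

lemma add_mem_latPts {N : ℕ} (V : Finset (ZL N)) {k : ℕ} (hk : 1 ≤ k)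
    {x y : ZL N} (hx : x ∈ latPts V 1) (hy : y ∈ latPts V k) :
    x + y ∈ latPts V (k + 1) := by
  have hconv : Convex ℝ (poly V) := convex_convexHull ℝ _
  have hx' : toR x ∈ poly V := mem_latPts_one.mp hx
  obtain ⟨p, hp, hpy⟩ := Set.mem_smul_set.mp hy
  have hk1 : (0:ℝ) < (k:ℝ) + 1 := by positivity
  have ha : (0:ℝ) ≤ ((k:ℝ)+1)⁻¹ := by positivity
  have hb : (0:ℝ) ≤ (k:ℝ)/((k:ℝ)+1) := by positivity
  have hab : ((k:ℝ)+1)⁻¹ + (k:ℝ)/((k:ℝ)+1) = 1 := by field_simp; ring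
  have hq := hconv hx' hp ha hb hab
  refine Set.mem_setOf.mpr (Set.mem_smul_set.mpr ⟨_, hq, ?_⟩)
  rw [smul_add, smul_smul, smul_smul, toR_add, ← hpy]
  push_cast
  rw [mul_inv_cancel₀ hk1.ne', mul_div_cancel₀ _ hk1.ne', one_smul]

lemma latPts_succ {N : ℕ} (V : Finset (ZL N)) {k : ℕ} (hk : 1 ≤ k)
    (hn : kNormal V (k + 1)) : latPts V (k + 1) = latPts V 1 + latPts V k := by
  ext x
  constructor
  · intro hx
    obtain ⟨f, hf, hsum⟩ := hn x hx
    exact ⟨f 0, hf 0, ∑ i : Fin k, f i.succ,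
      sum_mem_latPts V hk _ (fun i => hf _), by rw [← hsum, Fin.sum_univ_succ]⟩
  · rintro ⟨a, ha, b, hb, rfl⟩
    exact add_mem_latPts V hk ha hb

/-- A very ample lattice polytope `P` is normal iff `d_P = k_P`. -/
theorem stmt6 {N : ℕ} (V : Finset (ZL N)) (dP kP : ℕ)
    (hva : VeryAmple V)
    (hdP : IsLeast (dSet V) dP)
    (hkP : IsLeast (kSet V) kP) :
    NormalPoly V ↔ dP = kP := by

  have hk1 : 1 ≤ kP := hkP.1.1
  constructor
  · intro h
    have hkP1 : kP = 1 := le_antisymm (hkP.2 ⟨one_pos, fun k hk => h k hk⟩) hk1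
    have hdP1 : dP = 1 := le_antisymm
      (hdP.2 ⟨one_pos, fun k hk => latPts_succ V hk (h (k + 1) (by omega))⟩) hdP.1.1
    rw [hdP1, hkP1]
  · intro h
    have hkP1 : kP = 1 := by
      by_contra hne
      have h2 : 2 ≤ kP := by omega
      have hle : dP ≤ kP - 1 := hdP.2 ⟨by omega, fun k hk => latPts_succ V (by omega)
        (hkP.1.2 (k + 1) (by omega))⟩
      omega
    intro k hk
    exact hkP.1.2 k (by omega)
end

section
/- Let P be a smooth d-dimensional lattice polytope and let γ be an integer such that for every vertex v, P is contained in the simplex C_{v,γ} = conv(v, v + γ(w_{E_1} − v), ..., v + γ(w_{E_d} − v)), where w_{E_i} − v are the primitive edge direction generators at v. Then σ(u, d_P·v) ≤ d_P·γ for every u ∈ d_P·P ∩ M and vertex v; in particular m_P ≤ d_P·γ. -/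
/-!
At a smooth vertex `v` the edge generators `w_i - v` form a `ℤ`-basis of `M`, so
`u - d_P v = ∑ a_i (w_i - v)` with `a_i ∈ ℤ`. Writing `u = d_P p` with `p ∈ P ⊆ C_{v,γ}`, the
real coordinates of `p - v` in this basis are nonnegative with sum at most `γ`, and `a_i` is
`d_P` times them. Hence the `a_i` are natural numbers with `∑ a_i ≤ d_P γ`, and repeating each
`w_i` exactly `a_i` times exhibits `u - d_P v` as a sum of `∑ a_i` elements of `(P ∩ M) - v`.
-/

open Finset Pointwise

/-- `P` is smooth at each vertex `v`, witnessed by `w`: the points `w v i` are lattice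
points of `P`, the differences `w v i − v` (the primitive edge direction generators at
`v`) form a `ℤ`-basis of the lattice, and they generate the tangent cone of `P` at `v`. -/
def SmoothPolyAt {d : ℕ} (V : Finset (ZL d)) (w : ZL d → Fin d → ZL d) (v : ZL d) : Prop :=
  (∀ i, w v i ∈ latPts V 1) ∧
  (∀ x : ZL d, ∃! a : Fin d → ℤ, x = ∑ i, a i • (w v i - v)) ∧
  (∀ p ∈ poly V, ∃ a : Fin d → ℝ, (∀ i, 0 ≤ a i) ∧
    p = toR v + ∑ i, a i • (toR (w v i) - toR v))

section Lattice

variable {N : ℕ}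

lemma toR_sub (x y : ZL N) : toR (x - y) = toR x - toR y := by
  funext j
  simp [toR]

lemma toR_nsmul (n : ℕ) (x : ZL N) : toR (n • x) = (n : ℝ) • toR x := by
  funext j
  simp [toR]

lemma toR_sum_zsmul {ι : Type*} [Fintype ι] (a : ι → ℤ) (e : ι → ZL N) :
    toR (∑ i, a i • e i) = ∑ i, (a i : ℝ) • toR (e i) := by
  funext j
  simp [toR]

lemma span_toR_eq_top_of_forall_exists_sum {ι : Type*} [Fintype ι] (e : ι → ZL N)
    (he : ∀ x : ZL N, ∃ a : ι → ℤ, x = ∑ i, a i • e i) :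
    ⊤ ≤ Submodule.span ℝ (Set.range (toR ∘ e)) := by
  rw [← (Pi.basisFun ℝ (Fin N)).span_eq, Submodule.span_le]
  rintro - ⟨j, rfl⟩
  obtain ⟨a, ha⟩ := he (Pi.single j 1)
  have hj : Pi.basisFun ℝ (Fin N) j = ∑ i, (a i : ℝ) • toR (e i) := by
    rw [← toR_sum_zsmul, ← ha]
    funext k
    simp [toR, Pi.single_apply]
  rw [SetLike.mem_coe, hj]
  exact Submodule.sum_mem _ fun i _ => Submodule.smul_mem _ _ (Submodule.subset_span ⟨i, rfl⟩)

noncomputable def basisOfIntSpan {ι : Type*} [Fintype ι] (e : ι → ZL N)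
    (he : ∀ x : ZL N, ∃ a : ι → ℤ, x = ∑ i, a i • e i) (hcard : Fintype.card ι = N) :
    Module.Basis ι ℝ (Fin N → ℝ) :=
  basisOfTopLeSpanOfCardEqFinrank _ (span_toR_eq_top_of_forall_exists_sum e he) (by simpa)

lemma basisOfIntSpan_apply {ι : Type*} [Fintype ι] (e : ι → ZL N)
    (he : ∀ x : ZL N, ∃ a : ι → ℤ, x = ∑ i, a i • e i) (hcard : Fintype.card ι = N) (i : ι) :
    basisOfIntSpan e he hcard i = toR (e i) :=
  congrFun (coe_basisOfTopLeSpanOfCardEqFinrank ..) i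

lemma basisOfIntSpan_repr_toR_sum {ι : Type*} [Fintype ι] [DecidableEq ι] (e : ι → ZL N)
    (he : ∀ x : ZL N, ∃ a : ι → ℤ, x = ∑ i, a i • e i) (hcard : Fintype.card ι = N)
    (a : ι → ℤ) (i : ι) :
    (basisOfIntSpan e he hcard).repr (toR (∑ i, a i • e i)) i = a i := by
  simp only [toR_sum_zsmul, ← basisOfIntSpan_apply e he hcard, Module.Basis.repr_sum_self]

end Lattice

section Simplex

variable {ι E : Type*} [Fintype ι] [AddCommGroup E] [Module ℝ E]

lemma convex_setOf_repr_sub_nonneg_sum_le (b : Module.Basis ι ℝ E) (x : E) (c : ℝ) :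
    Convex ℝ {q | (∀ i, 0 ≤ b.repr (q - x) i) ∧ ∑ i, b.repr (q - x) i ≤ c} := by
  have hK : Convex ℝ {y : ι → ℝ | (∀ i, 0 ≤ y i) ∧ ∑ i, y i ≤ c} := by
    simp only [Set.ofPred_and, Set.ofPred_forall]
    exact (convex_iInter fun i => convex_halfSpace_ge (LinearMap.proj i).isLinear 0).inter
      (convex_halfSpace_le ⟨fun y z => sum_add_distrib, fun a y => (mul_sum ..).symm⟩ c)
  simpa [sub_eq_neg_add] using
    (hK.linear_preimage b.equivFun.toLinearMap).translate_preimage_right (-x)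

lemma repr_sub_nonneg_and_sum_le_of_mem_convexHull [DecidableEq ι] (b : Module.Basis ι ℝ E)
    {x p : E} {c : ℝ} (hc : 0 ≤ c)
    (hp : p ∈ convexHull ℝ (insert x (Set.range fun i => x + c • b i))) :
    (∀ i, 0 ≤ b.repr (p - x) i) ∧ ∑ i, b.repr (p - x) i ≤ c := by
  refine convexHull_min ?_ (convex_setOf_repr_sub_nonneg_sum_le b x c) hp
  rintro q (rfl | ⟨i, rfl⟩)
  · simp [hc]
  · simp only [add_sub_cancel_left, map_smul, Module.Basis.repr_self, Finsupp.smul_apply,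
      Finsupp.single_apply, smul_eq_mul, Set.mem_ofPred_eq]
    refine ⟨fun j => by positivity, ?_⟩
    simp

end Simplex

lemma sum_mem_sigmaSet {N m : ℕ} {V : Finset (ZL N)} {dP : ℕ} {x v : ZL N} {y : Fin m → ZL N}
    (hy : ∀ i, y i ∈ latPts V 1) (n : Fin m → ℕ) (hx : x - dP • v = ∑ i, n i • (y i - v)) :
    ∑ i, n i ∈ sigmaSet V dP x v := by
  refine ⟨fun j => y (finSigmaFinEquiv.symm j).1, fun j => hy _, ?_⟩
  rw [hx, ← finSigmaFinEquiv.sum_comp, Fintype.sum_sigma]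
  simp only [Equiv.symm_apply_apply, sum_const, card_univ, Fintype.card_fin]

lemma SmoothPolyAt.exists_nat_coords_sum_le {d : ℕ} {V : Finset (ZL d)} {w : ZL d → Fin d → ZL d}
    {v : ZL d} (hv : SmoothPolyAt V w v) {γ dP : ℕ}
    (hγ : poly V ⊆ convexHull ℝ (insert (toR v)
      (Set.range fun i : Fin d => toR v + (γ : ℝ) • (toR (w v i) - toR v))))
    {u : ZL d} (hu : u ∈ latPts V dP) :
    ∃ n : Fin d → ℕ, u - dP • v = ∑ i, n i • (w v i - v) ∧ ∑ i, n i ≤ dP * γ := by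
  obtain ⟨-, hbasis, -⟩ := hv
  have he : ∀ x : ZL d, ∃ a : Fin d → ℤ, x = ∑ i, a i • (w v i - v) := fun x => (hbasis x).exists
  set B := basisOfIntSpan _ he (Fintype.card_fin d)
  obtain ⟨p, hp, hpu⟩ := hu
  have hB : ∀ i, B i = toR (w v i) - toR v := fun i => by rw [basisOfIntSpan_apply, toR_sub]
  obtain ⟨hnonneg, hsum⟩ := repr_sub_nonneg_and_sum_le_of_mem_convexHull B (Nat.cast_nonneg γ)
    (by simpa only [hB] using hγ hp)
  obtain ⟨a, ha⟩ := he (u - dP • v)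
  have hcoord : ∀ i, (a i : ℝ) = dP * B.repr (p - toR v) i := fun i => by
    rw [← basisOfIntSpan_repr_toR_sum _ he (Fintype.card_fin d) a i, ← ha, toR_sub, toR_nsmul,
      ← hpu, ← smul_sub, map_smul, Finsupp.smul_apply, smul_eq_mul]
  have ha_nonneg : ∀ i, 0 ≤ a i := fun i => by
    have : (0 : ℝ) ≤ a i := hcoord i ▸ mul_nonneg dP.cast_nonneg (hnonneg i)
    exact_mod_cast this
  lift a to Fin d → ℕ using ha_nonneg
  refine ⟨a, by simpa only [natCast_zsmul] using ha, ?_⟩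
  have : (∑ i, a i : ℝ) ≤ dP * γ := by
    push_cast at hcoord ⊢
    rw [sum_congr rfl fun i _ => hcoord i, ← mul_sum]
    gcongr
  exact_mod_cast this

theorem stmt13_general {d : ℕ} (V : Finset (ZL d)) (w : ZL d → Fin d → ZL d)
    (hsmooth : ∀ v, IsVertex V v → SmoothPolyAt V w v)
    (γ dP : ℕ)
    (hγ : ∀ v, IsVertex V v → poly V ⊆
      convexHull ℝ (insert (toR v)
        (Set.range fun i : Fin d => toR v + (γ : ℝ) • (toR (w v i) - toR v)))) :
    (∀ u ∈ latPts V dP, ∀ v, IsVertex V v →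
        ∀ s, IsLeast (sigmaSet V dP u v) s → s ≤ dP * γ) ∧
      ∀ mP, IsGreatest (mSet V dP) mP → mP ≤ dP * γ := by
  have hsigma : ∀ u ∈ latPts V dP, ∀ v, IsVertex V v →
      ∀ s, IsLeast (sigmaSet V dP u v) s → s ≤ dP * γ := by
    intro u hu v hv s hs
    obtain ⟨n, hn, hle⟩ := (hsmooth v hv).exists_nat_coords_sum_le (hγ v hv) hu
    exact (hs.2 (sum_mem_sigmaSet (hsmooth v hv).1 n hn)).trans hle
  refine ⟨hsigma, fun mP hmP => ?_⟩
  obtain ⟨u, hu, v, hv, hleast⟩ := hmP.1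
  exact hsigma u hu v hv mP hleast

/-- For a smooth `d`-dimensional lattice polytope `P` and an integer `γ`
such that `P ⊆ C_{v,γ}` for every vertex `v`, one has `σ(u, d_P·v) ≤ d_P·γ` for every
`u ∈ d_P·P ∩ M` and vertex `v`; in particular `m_P ≤ d_P·γ`. -/
theorem stmt13 {d : ℕ} (V : Finset (ZL d)) (w : ZL d → Fin d → ZL d)
    (hdim : Module.finrank ℝ ↥(vectorSpan ℝ (poly V)) = d)
    (hsmooth : ∀ v, IsVertex V v → SmoothPolyAt V w v)
    (γ dP : ℕ)
    (hdP : IsLeast (dSet V) dP)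
    (hγ : ∀ v, IsVertex V v → poly V ⊆
      convexHull ℝ (insert (toR v)
        (Set.range fun i : Fin d => toR v + (γ : ℝ) • (toR (w v i) - toR v)))) :
    (∀ u ∈ latPts V dP, ∀ v, IsVertex V v →
        ∀ s, IsLeast (sigmaSet V dP u v) s → s ≤ dP * γ) ∧
      ∀ mP, IsGreatest (mSet V dP) mP → mP ≤ dP * γ :=
  stmt13_general V w hsmooth γ dP hγ
end
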